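/- arXiv:2004.00145 — 2 statements merged into one kernel-verified Lean document; each statement's English description precedes it below -/
import Mathlib

section
/- The Grassmann Fourier transform preserves the ℓ¹ norm: for any element f of the Grassmann algebra in the generators ψ_i^± with ℓ¹ norm ‖f‖ = Σ_S |f_S|, its Grassmann Fourier transform f̂(η) = ∫dψ exp(−i Σ_i (η_i⁺ψ_i⁻ + ψ_i⁺η_i⁻)) f(ψ) satisfies ‖f̂‖ = ‖f‖; in particular each coefficient of f̂ equals a coefficient of f multiplied by a complex number of modulus 1. -/
open Finset

/-- A Grassmann algebra with two independent families of anticommuting generators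
`ψ i ε` and `η i ε` (`ε : Bool`, `true` = `+`, `false` = `−`), with Berezin integration
over the single `ψ` and `η` generators, defined by the standard rules. -/
structure GrassmannSetup (n : ℕ) where
  A : Type
  [ring : Ring A]
  [algebra : Algebra ℂ A]
  ψ : Fin n → Bool → A
  η : Fin n → Bool → A
  anticomm_ψψ : ∀ i ε j ε', ψ i ε * ψ j ε' = -(ψ j ε' * ψ i ε)
  anticomm_ψη : ∀ i ε j ε', ψ i ε * η j ε' = -(η j ε' * ψ i ε)
  anticomm_ηη : ∀ i ε j ε', η i ε * η j ε' = -(η j ε' * η i ε)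
  intη : Fin n → Bool → (A →ₗ[ℂ] A)
  intη_one : ∀ i ε, intη i ε 1 = 0
  intη_η_mul : ∀ i ε j ε' f, intη i ε (η j ε' * f)
      = (if i = j ∧ ε = ε' then f else 0) - η j ε' * intη i ε f
  intη_ψ_mul : ∀ i ε j ε' f, intη i ε (ψ j ε' * f) = -(ψ j ε' * intη i ε f)
  intψ : Fin n → Bool → (A →ₗ[ℂ] A)
  intψ_one : ∀ i ε, intψ i ε 1 = 0
  intψ_ψ_mul : ∀ i ε j ε' f, intψ i ε (ψ j ε' * f)
      = (if i = j ∧ ε = ε' then f else 0) - ψ j ε' * intψ i ε f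
  intψ_η_mul : ∀ i ε j ε' f, intψ i ε (η j ε' * f) = -(η j ε' * intψ i ε f)

attribute [instance] GrassmannSetup.ring GrassmannSetup.algebra

/-- Truncated exponential `Σ_{k=0}^{N} x^k / k!` (exact by nilpotency for large `N`). -/
noncomputable def gexp {n : ℕ} (G : GrassmannSetup n) (N : ℕ) (x : G.A) : G.A :=
  ∑ k ∈ Finset.range (N + 1), ((Nat.factorial k : ℂ))⁻¹ • x ^ k

/-- The Berezin integral over all `ψ` generators, `∫dψ := ∏_i ∫dψ_i⁺ ∫dψ_i⁻`. -/
noncomputable def intψAll {n : ℕ} (G : GrassmannSetup n) : G.A →ₗ[ℂ] G.A :=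
  ((List.finRange n).map fun i => (G.intψ i true).comp (G.intψ i false)).foldr
    (fun f g => f.comp g) LinearMap.id

/-- The Grassmann Fourier transform
`f̂(η) = ∫dψ exp(−i Σ_i (η_i⁺ψ_i⁻ + ψ_i⁺η_i⁻)) f(ψ)`. -/
noncomputable def grassmannFourier {n : ℕ} (G : GrassmannSetup n) (f : G.A) : G.A :=
  intψAll G (gexp G (2 * n)
      ((-Complex.I) • ∑ i, (G.η i true * G.ψ i false + G.ψ i true * G.η i false)) * f)

/-- The ordered monomial `ψ^S` (in the fixed order `ψ_1⁺ ψ_1⁻ ψ_2⁺ ψ_2⁻ ⋯`). -/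
noncomputable def ψMonomial {n : ℕ} (G : GrassmannSetup n)
    (S : Finset (Fin n × Bool)) : G.A :=
  ((List.finRange n).map fun i =>
    (if (i, true) ∈ S then G.ψ i true else 1) *
    (if (i, false) ∈ S then G.ψ i false else 1)).prod

/-- The ordered monomial `η^T`. -/
noncomputable def ηMonomial {n : ℕ} (G : GrassmannSetup n)
    (T : Finset (Fin n × Bool)) : G.A :=
  ((List.finRange n).map fun i =>
    (if (i, true) ∈ T then G.η i true else 1) *
    (if (i, false) ∈ T then G.η i false else 1)).prod

/-! The exponent is a sum of `2n` pairwise commuting square-zero terms `-i η_i⁺ψ_i⁻`,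
`-i ψ_i⁺η_i⁻`, so the exponential factorizes over the sites as
`∏_i (1 - i η_i⁺ψ_i⁻)(1 - i ψ_i⁺η_i⁻)`, and so does `ψ^S`. The pair integral `∫dψ_i⁺ ∫dψ_i⁻`
passes through the factors of the other sites and, on the right, through the
η-polynomials produced by the sites already integrated. So `∫dψ e^{…} ψ^S` is a product of
one-site integrals, each a phase `-1` or `-i` times the complementary η-factor:
`ψ^S ↦ phase(S) η^{S*}` with `(i, ±) ∈ S*` iff `(i, ∓) ∉ S`. As `S ↦ S*` is a bijection, the
transform maps the ψ-monomials to the η-monomials up to unimodular factors, and the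
ψ-subalgebra is spanned by the ψ-monomials. -/

theorem Algebra.adjoin_le_of_one_mem_of_mul_mem {R A : Type*} [CommSemiring R] [Semiring A]
    [Algebra R A] {s : Set A} {M : Submodule R A} (h1 : 1 ∈ M)
    (hmul : ∀ x ∈ s, ∀ y ∈ M, x * y ∈ M) :
    Subalgebra.toSubmodule (Algebra.adjoin R s) ≤ M := by
  rw [Algebra.adjoin_eq_span, Submodule.span_le]
  intro x hx
  induction hx using Submonoid.closure_induction_left with
  | one => exact h1
  | mul_left x hx y _ ih => exact hmul x hx y ih

theorem commute_mul_of_anticomm {R : Type*} [Ring R] {x y z : R} (hx : x * z = -(z * x))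
    (hy : y * z = -(z * y)) : Commute (x * y) z := by
  rw [Commute, SemiconjBy, mul_assoc, hy, mul_neg, ← mul_assoc, hx, neg_mul, neg_neg,
    mul_assoc]

theorem List.prod_map_mul_prod_map_of_commute {ι M : Type*} [Monoid M] {f g : ι → M}
    (h : ∀ i j, Commute (f i) (g j)) (l : List ι) :
    (l.map f).prod * (l.map g).prod = (l.map fun i => f i * g i).prod := by
  induction l with
  | nil => simp
  | cons i l ih =>
    have hcomm : Commute (l.map f).prod (g i) :=
      Commute.list_prod_left _ _ fun x hx => by
        obtain ⟨j, -, rfl⟩ := List.mem_map.1 hx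
        exact h j i
    simp only [List.map_cons, List.prod_cons]
    rw [mul_assoc, ← mul_assoc (l.map f).prod, hcomm.eq, mul_assoc, ih, mul_assoc]

theorem List.prod_map_smul {ι R M : Type*} [CommMonoid R] [Monoid M] [MulAction R M]
    [IsScalarTower R M M] [SMulCommClass R M M] (c : ι → R) (f : ι → M) (l : List ι) :
    (l.map fun i => c i • f i).prod = (l.map c).prod • (l.map f).prod := by
  induction l with
  | nil => simp
  | cons i l ih => simp only [List.map_cons, List.prod_cons, ih, smul_mul_smul_comm]

theorem List.prod_map_apply_mul_of_forall {ι R A : Type*} [CommSemiring R] [Semiring A]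
    [Module R A] (F : ι → Module.End R A) {z : A} {l : List ι}
    (h : ∀ i ∈ l, ∀ v, F i (z * v) = z * F i v) (v : A) :
    (l.map F).prod (z * v) = z * (l.map F).prod v := by
  induction l with
  | nil => rfl
  | cons i l ih =>
    simp only [List.map_cons, List.prod_cons, Module.End.mul_apply]
    rw [ih fun j hj => h j (List.mem_cons_of_mem _ hj), h i List.mem_cons_self]

theorem List.prod_map_apply_prod_map_of_nodup {ι R A : Type*} [CommSemiring R] [Semiring A]
    [Module R A] (F : ι → Module.End R A) (L : ι → A) (N : Submonoid A)
    (hcomm : ∀ i j, i ≠ j → ∀ v, F j (L i * v) = L i * F j v)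
    (hN : ∀ i, F i (L i) ∈ N) (hright : ∀ i, ∀ w ∈ N, F i (L i * w) = F i (L i) * w)
    {l : List ι} (hl : l.Nodup) :
    (l.map F).prod (l.map L).prod = (l.map fun i => F i (L i)).prod := by
  induction l with
  | nil => rfl
  | cons i l ih =>
    obtain ⟨hi, hl⟩ := List.nodup_cons.1 hl
    simp only [List.map_cons, List.prod_cons, Module.End.mul_apply]
    rw [List.prod_map_apply_mul_of_forall F
        (fun j hj => hcomm i j fun h => hi (h ▸ hj)), ih hl,
      hright i _ (list_prod_mem fun x hx => by
        obtain ⟨j, -, rfl⟩ := List.mem_map.1 hx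
        exact hN j)]

theorem Commute.list_sum_pow_eq_zero {R : Type*} [Semiring R] {k : ℕ} {L : List R}
    (hL : ∀ x ∈ L, x ^ (k + 1) = 0) (hc : L.Pairwise Commute) :
    L.sum ^ (k * L.length + 1) = 0 := by
  induction L with
  | nil => simp
  | cons x L ih =>
    obtain ⟨hx, hc⟩ := List.pairwise_cons.1 hc
    rw [List.sum_cons, List.length_cons]
    exact (Commute.list_sum_right x L hx).add_pow_eq_zero_of_add_le_succ_of_pow_eq_zero
      (hL x List.mem_cons_self) (ih (fun y hy => hL y (List.mem_cons_of_mem _ hy)) hc)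
      (by ring_nf; omega)

theorem Commute.isNilpotent_list_sum {R : Type*} [Semiring R] {L : List R}
    (hL : ∀ x ∈ L, IsNilpotent x) (hc : L.Pairwise Commute) : IsNilpotent L.sum := by
  induction L with
  | nil => simp
  | cons x L ih =>
    obtain ⟨hx, hc⟩ := List.pairwise_cons.1 hc
    exact (Commute.list_sum_right x L hx).isNilpotent_add (hL x List.mem_cons_self)
      (ih (fun y hy => hL y (List.mem_cons_of_mem _ hy)) hc)

theorem IsNilpotent.exp_list_sum {A : Type*} [Ring A] [Module ℚ A] {L : List A}
    (hL : ∀ x ∈ L, IsNilpotent x) (hc : L.Pairwise Commute) :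
    IsNilpotent.exp L.sum = (L.map IsNilpotent.exp).prod := by
  induction L with
  | nil => simp
  | cons x L ih =>
    obtain ⟨hx, hc⟩ := List.pairwise_cons.1 hc
    have hL' : ∀ y ∈ L, IsNilpotent y := fun y hy => hL y (List.mem_cons_of_mem _ hy)
    rw [List.sum_cons, IsNilpotent.exp_add_of_commute (Commute.list_sum_right x L hx)
      (hL x List.mem_cons_self) (Commute.isNilpotent_list_sum hL' hc), ih hL' hc,
      List.map_cons, List.prod_cons]

theorem IsNilpotent.exp_eq_one_add_of_sq_eq_zero {A : Type*} [Ring A] [Module ℚ A] {x : A}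
    (hx : x ^ 2 = 0) : IsNilpotent.exp x = 1 + x := by
  simp [IsNilpotent.exp_eq_sum hx, Finset.sum_range_succ]

theorem Module.Basis.repr_sum_smul_comp_apply {ι κ R M : Type*} [Fintype κ] [Semiring R]
    [AddCommMonoid M] [Module R M] (b : Module.Basis ι R M) (e : κ ↪ ι) (c : κ → R) (k : κ) :
    b.repr (∑ j, c j • b (e j)) (e k) = c k := by
  classical
  simp [Finsupp.single_apply, e.injective.eq_iff]

theorem Module.Basis.sum_norm_repr_sum_smul_comp {ι κ R M : Type*} [Fintype ι] [Fintype κ]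
    [SeminormedRing R] [AddCommGroup M] [Module R M] (b : Module.Basis ι R M) (e : κ ↪ ι)
    (c : κ → R) : ∑ i, ‖b.repr (∑ j, c j • b (e j)) i‖ = ∑ j, ‖c j‖ := by
  classical
  rw [← Finset.sum_subset (Finset.subset_univ (Finset.univ.map e)), Finset.sum_map]
  · simp only [b.repr_sum_smul_comp_apply]
  · intro i _ hi
    have : ∀ j, e j ≠ i := fun j hj => hi (Finset.mem_map.2 ⟨j, Finset.mem_univ _, hj⟩)
    simp [this]

theorem mul_ite_one_eq_smul {R A : Type*} [Ring R] [Ring A] [Module R A] {x y : A}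
    (h : x * y = -(y * x)) (p : Prop) [Decidable p] :
    x * (if p then y else 1) = (if p then (-1 : R) else 1) • ((if p then y else 1) * x) := by
  split_ifs <;> simp [h]

namespace GrassmannSetup

variable {n : ℕ} (G : GrassmannSetup n)

noncomputable instance instModuleRat : Module ℚ G.A := Module.compHom G.A (algebraMap ℚ ℂ)

instance instIsAddTorsionFree : IsAddTorsionFree G.A := .of_module_rat G.A

theorem gexp_eq_exp {N : ℕ} {x : G.A} (hx : x ^ (N + 1) = 0) :
    gexp G N x = IsNilpotent.exp x := by
  rw [gexp, IsNilpotent.exp_eq_sum hx]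
  refine Finset.sum_congr rfl fun k _ => ?_
  change _ = algebraMap ℚ ℂ _ • (x ^ k)
  simp

def ψGenerators : Set G.A := Set.range fun p : Fin n × Bool => G.ψ p.1 p.2

def ηGenerators : Set G.A := Set.range fun p : Fin n × Bool => G.η p.1 p.2

def generators : Set G.A := G.ψGenerators ∪ G.ηGenerators

def localGenerators (i : Fin n) : Set G.A := Set.range (G.ψ i) ∪ Set.range (G.η i)

variable {G}

theorem ψ_mem_generators (i : Fin n) (ε : Bool) : G.ψ i ε ∈ G.generators :=
  Or.inl ⟨(i, ε), rfl⟩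

theorem η_mem_generators (i : Fin n) (ε : Bool) : G.η i ε ∈ G.generators :=
  Or.inr ⟨(i, ε), rfl⟩

theorem localGenerators_subset (i : Fin n) : G.localGenerators i ⊆ G.generators := by
  rintro _ (⟨ε, rfl⟩ | ⟨ε, rfl⟩)
  exacts [ψ_mem_generators i ε, η_mem_generators i ε]

theorem anticomm_of_mem_generators {x y : G.A} (hx : x ∈ G.generators)
    (hy : y ∈ G.generators) : x * y = -(y * x) := by
  rcases hx with ⟨p, rfl⟩ | ⟨p, rfl⟩ <;> rcases hy with ⟨q, rfl⟩ | ⟨q, rfl⟩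
  · exact G.anticomm_ψψ ..
  · exact G.anticomm_ψη ..
  · rw [G.anticomm_ψη, neg_neg]
  · exact G.anticomm_ηη ..

theorem mul_self_eq_zero_of_mem_generators {x : G.A} (hx : x ∈ G.generators) : x * x = 0 :=
  self_eq_neg.mp (anticomm_of_mem_generators hx hx)

theorem commute_mul_of_mem_adjoin {x y z : G.A} (hx : x ∈ G.generators)
    (hy : y ∈ G.generators) (hz : z ∈ Algebra.adjoin ℂ G.generators) : Commute (x * y) z :=
  Algebra.commute_of_mem_adjoin_of_forall_mem_commute hz fun _ hw =>
    commute_mul_of_anticomm (anticomm_of_mem_generators hx hw)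
      (anticomm_of_mem_generators hy hw)

theorem mul_sq_eq_zero_of_mem_generators {x y : G.A} (hx : x ∈ G.generators)
    (hy : y ∈ G.generators) : (x * y) ^ 2 = 0 := by
  rw [sq, mul_assoc, ← mul_assoc y, anticomm_of_mem_generators hy hx, neg_mul, mul_neg,
    mul_assoc, ← mul_assoc x, mul_self_eq_zero_of_mem_generators hx, zero_mul, neg_zero]

theorem intψ_mem_adjoin (i : Fin n) (ε : Bool) {z : G.A}
    (hz : z ∈ Algebra.adjoin ℂ G.generators) : G.intψ i ε z ∈ Algebra.adjoin ℂ G.generators := by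
  set S := Algebra.adjoin ℂ G.generators
  suffices h : Subalgebra.toSubmodule S ≤
      Subalgebra.toSubmodule S ⊓ (Subalgebra.toSubmodule S).comap (G.intψ i ε) from (h hz).2
  refine Algebra.adjoin_le_of_one_mem_of_mul_mem ⟨S.one_mem, by simp [G.intψ_one]⟩ ?_
  rintro x hx y ⟨hy, hy' : G.intψ i ε y ∈ S⟩
  have hmul : ∀ {w}, w ∈ S → x * w ∈ S := S.mul_mem (Algebra.subset_adjoin hx)
  refine ⟨hmul hy, ?_⟩
  rcases hx with ⟨⟨j, ε'⟩, rfl⟩ | ⟨⟨j, ε'⟩, rfl⟩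
  · change G.intψ i ε (G.ψ j ε' * y) ∈ S
    rw [G.intψ_ψ_mul]
    exact S.sub_mem (by split_ifs; exacts [hy, S.zero_mem]) (hmul hy')
  · change G.intψ i ε (G.η j ε' * y) ∈ S
    rw [G.intψ_η_mul]
    exact S.neg_mem (hmul hy')

theorem intψ_mul_of_intψ_eq_zero (i : Fin n) (ε : Bool) {z w : G.A}
    (hz : z ∈ Algebra.adjoin ℂ G.generators) (hw : G.intψ i ε w = 0) :
    G.intψ i ε (z * w) = G.intψ i ε z * w := by
  suffices h : Subalgebra.toSubmodule (Algebra.adjoin ℂ G.generators) ≤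
      LinearMap.eqLocus (G.intψ i ε ∘ₗ LinearMap.mulRight ℂ w)
        (LinearMap.mulRight ℂ w ∘ₗ G.intψ i ε) from h hz
  refine Algebra.adjoin_le_of_one_mem_of_mul_mem (by simp [hw, G.intψ_one]) ?_
  rintro x hx y hy
  simp only [LinearMap.mem_eqLocus, LinearMap.comp_apply, LinearMap.mulRight_apply] at hy ⊢
  rcases hx with ⟨⟨j, ε'⟩, rfl⟩ | ⟨⟨j, ε'⟩, rfl⟩
  · rw [mul_assoc, G.intψ_ψ_mul, G.intψ_ψ_mul, hy]
    split_ifs <;> simp [sub_mul, mul_assoc]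
  · rw [mul_assoc, G.intψ_η_mul, G.intψ_η_mul, hy, neg_mul, mul_assoc]

theorem intψ_eq_zero_of_mem_adjoin_η (i : Fin n) (ε : Bool) {z : G.A}
    (hz : z ∈ Algebra.adjoin ℂ G.ηGenerators) : G.intψ i ε z = 0 := by
  suffices h : Subalgebra.toSubmodule (Algebra.adjoin ℂ G.ηGenerators) ≤
      LinearMap.ker (G.intψ i ε) from h hz
  refine Algebra.adjoin_le_of_one_mem_of_mul_mem (G.intψ_one i ε) ?_
  rintro _ ⟨⟨j, ε'⟩, rfl⟩ y hy
  rw [LinearMap.mem_ker] at hy ⊢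
  rw [G.intψ_η_mul, hy, mul_zero, neg_zero]

variable (G) in
def intψPair (i : Fin n) : Module.End ℂ G.A := G.intψ i true ∘ₗ G.intψ i false

variable (G) in
theorem intψAll_eq_prod : intψAll G = ((List.finRange n).map G.intψPair).prod := rfl

theorem intψPair_mul_of_ne {i j : Fin n} (hij : i ≠ j) {z : G.A}
    (hz : z ∈ Algebra.adjoin ℂ (G.localGenerators i)) (v : G.A) :
    G.intψPair j (z * v) = z * G.intψPair j v := by
  induction hz using Algebra.adjoin_induction generalizing v with
  | mem x hx =>
    have hpass : ∀ ε v, G.intψ j ε (x * v) = -(x * G.intψ j ε v) := by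
      rcases hx with ⟨ε', rfl⟩ | ⟨ε', rfl⟩ <;> intro ε v
      · rw [G.intψ_ψ_mul, if_neg (fun h => hij h.1.symm), zero_sub]
      · exact G.intψ_η_mul ..
    simp only [intψPair, LinearMap.comp_apply, hpass, map_neg, neg_neg]
  | algebraMap r => simp [Algebra.algebraMap_eq_smul_one]
  | add x y _ _ hx hy => simp only [add_mul, map_add, hx, hy]
  | mul x y _ _ hx hy => rw [mul_assoc, hx, hy, mul_assoc]

theorem intψPair_mul_of_mem_adjoin_η (i : Fin n) {z w : G.A}
    (hz : z ∈ Algebra.adjoin ℂ G.generators) (hw : w ∈ Algebra.adjoin ℂ G.ηGenerators) :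
    G.intψPair i (z * w) = G.intψPair i z * w := by
  simp only [intψPair, LinearMap.comp_apply]
  rw [intψ_mul_of_intψ_eq_zero i false hz (intψ_eq_zero_of_mem_adjoin_η i false hw),
    intψ_mul_of_intψ_eq_zero i true (intψ_mem_adjoin i false hz)
      (intψ_eq_zero_of_mem_adjoin_η i true hw)]

variable (G) in
noncomputable def fourierFactor (i : Fin n) : G.A :=
  (1 + (-Complex.I) • (G.η i true * G.ψ i false)) *
    (1 + (-Complex.I) • (G.ψ i true * G.η i false))

theorem commute_smul_mul_of_mem_adjoin (c : ℂ) {x y z : G.A} (hx : x ∈ G.generators)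
    (hy : y ∈ G.generators) (hz : z ∈ Algebra.adjoin ℂ G.generators) :
    Commute (c • (x * y)) z :=
  (commute_mul_of_mem_adjoin hx hy hz).smul_left c

theorem smul_mul_mem_adjoin (c : ℂ) {x y : G.A} (hx : x ∈ G.generators)
    (hy : y ∈ G.generators) : c • (x * y) ∈ Algebra.adjoin ℂ G.generators :=
  Subalgebra.smul_mem _ (Subalgebra.mul_mem _ (Algebra.subset_adjoin hx)
    (Algebra.subset_adjoin hy)) c

theorem smul_mul_sq_eq_zero (c : ℂ) {x y : G.A} (hx : x ∈ G.generators)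
    (hy : y ∈ G.generators) : (c • (x * y)) ^ 2 = 0 := by
  rw [smul_pow, mul_sq_eq_zero_of_mem_generators hx hy, smul_zero]

theorem commute_fourierFactor (i : Fin n) {z : G.A} (hz : z ∈ Algebra.adjoin ℂ G.generators) :
    Commute (G.fourierFactor i) z :=
  ((Commute.one_left z).add_left (commute_smul_mul_of_mem_adjoin _ (η_mem_generators ..)
    (ψ_mem_generators ..) hz)).mul_left ((Commute.one_left z).add_left
      (commute_smul_mul_of_mem_adjoin _ (ψ_mem_generators ..) (η_mem_generators ..) hz))

variable (G) in
theorem gexp_fourierExponent :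
    gexp G (2 * n) ((-Complex.I) • ∑ i, (G.η i true * G.ψ i false + G.ψ i true * G.η i false))
      = ((List.finRange n).map G.fourierFactor).prod := by
  set a : Fin n → G.A := fun i => (-Complex.I) • (G.η i true * G.ψ i false)
  set b : Fin n → G.A := fun i => (-Complex.I) • (G.ψ i true * G.η i false)
  have ha : ∀ i, a i ∈ Algebra.adjoin ℂ G.generators := fun i =>
    smul_mul_mem_adjoin _ (η_mem_generators ..) (ψ_mem_generators ..)
  have hb : ∀ i, b i ∈ Algebra.adjoin ℂ G.generators := fun i =>
    smul_mul_mem_adjoin _ (ψ_mem_generators ..) (η_mem_generators ..)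
  have hca : ∀ i {z}, z ∈ Algebra.adjoin ℂ G.generators → Commute (a i) z := fun i _ hz =>
    commute_smul_mul_of_mem_adjoin _ (η_mem_generators ..) (ψ_mem_generators ..) hz
  have hcb : ∀ i {z}, z ∈ Algebra.adjoin ℂ G.generators → Commute (b i) z := fun i _ hz =>
    commute_smul_mul_of_mem_adjoin _ (ψ_mem_generators ..) (η_mem_generators ..) hz
  have ha2 : ∀ i, a i ^ 2 = 0 := fun i =>
    smul_mul_sq_eq_zero _ (η_mem_generators ..) (ψ_mem_generators ..)
  have hb2 : ∀ i, b i ^ 2 = 0 := fun i =>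
    smul_mul_sq_eq_zero _ (ψ_mem_generators ..) (η_mem_generators ..)
  set L := (List.finRange n).map fun i => a i + b i
  have hsum : (-Complex.I) • ∑ i, (G.η i true * G.ψ i false + G.ψ i true * G.η i false)
      = L.sum := by
    rw [Finset.smul_sum, Fin.sum_univ_def]
    simp only [smul_add, L, a, b]
  have hcube : ∀ x ∈ L, x ^ (2 + 1) = 0 := by
    simp only [L, List.mem_map]
    rintro _ ⟨i, -, rfl⟩
    exact (hca i (hb i)).add_pow_eq_zero_of_add_le_succ_of_pow_eq_zero (ha2 i) (hb2 i) le_rfl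
  have hcomm : L.Pairwise Commute := List.pairwise_map.2 <| List.pairwise_of_forall fun i j =>
    ((hca i (ha j)).add_right (hca i (hb j))).add_left ((hcb i (ha j)).add_right (hcb i (hb j)))
  have hnil : L.sum ^ (2 * n + 1) = 0 := by
    simpa [L] using Commute.list_sum_pow_eq_zero hcube hcomm
  rw [hsum, gexp_eq_exp G hnil, IsNilpotent.exp_list_sum (fun x hx => ⟨_, hcube x hx⟩) hcomm,
    List.map_map]
  refine congrArg List.prod (List.map_congr_left fun i _ => ?_)
  rw [Function.comp_apply, IsNilpotent.exp_add_of_commute (hca i (hb i)) ⟨2, ha2 i⟩ ⟨2, hb2 i⟩,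
    IsNilpotent.exp_eq_one_add_of_sq_eq_zero (ha2 i),
    IsNilpotent.exp_eq_one_add_of_sq_eq_zero (hb2 i)]
  rfl

variable (G) in
def ψFactor (S : Finset (Fin n × Bool)) (i : Fin n) : G.A :=
  (if (i, true) ∈ S then G.ψ i true else 1) * (if (i, false) ∈ S then G.ψ i false else 1)

variable (G) in
def ηFactor (T : Finset (Fin n × Bool)) (i : Fin n) : G.A :=
  (if (i, true) ∈ T then G.η i true else 1) * (if (i, false) ∈ T then G.η i false else 1)

variable (G) in
theorem ψMonomial_eq_prod (S : Finset (Fin n × Bool)) :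
    ψMonomial G S = ((List.finRange n).map (G.ψFactor S)).prod := rfl

variable (G) in
theorem ηMonomial_eq_prod (T : Finset (Fin n × Bool)) :
    ηMonomial G T = ((List.finRange n).map (G.ηFactor T)).prod := rfl

variable (G) in
@[simp]
theorem ψMonomial_empty : ψMonomial G ∅ = 1 := by
  simp [ψMonomial]

variable (G) in
@[simp]
theorem ηMonomial_empty : ηMonomial G ∅ = 1 := by
  simp [ηMonomial]

def dualSupport (S : Finset (Fin n × Bool)) : Finset (Fin n × Bool) :=
  Finset.univ.filter fun p => (p.1, !p.2) ∉ S

theorem dualSupport_involutive : Function.Involutive (dualSupport (n := n)) := by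
  intro S
  ext p
  simp [dualSupport]

noncomputable def localPhase (S : Finset (Fin n × Bool)) (i : Fin n) : ℂ :=
  if ((i, true) ∈ S ↔ (i, false) ∈ S) then -1 else -Complex.I

noncomputable def phase (S : Finset (Fin n × Bool)) : ℂ := ∏ i, localPhase S i

theorem norm_phase (S : Finset (Fin n × Bool)) : ‖phase S‖ = 1 := by
  rw [phase, norm_prod]
  exact Finset.prod_eq_one fun i _ => by unfold localPhase; split_ifs <;> simp

theorem intψPair_fourierFactor_mul_ψFactor (S : Finset (Fin n × Bool)) (i : Fin n) :
    G.intψPair i (G.fourierFactor i * G.ψFactor S i)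
      = localPhase S i • G.ηFactor (dualSupport S) i := by
  have hψψ : ∀ v, G.ψ i false * (G.ψ i true * v) = -(G.ψ i true * (G.ψ i false * v)) := by
    intro v; rw [← mul_assoc, G.anticomm_ψψ, neg_mul, mul_assoc]
  have hηψ' : ∀ j ε j' ε', G.η j ε * G.ψ j' ε' = -(G.ψ j' ε' * G.η j ε) := by
    intro j ε j' ε'; rw [G.anticomm_ψη, neg_neg]
  have hηψ : ∀ j ε j' ε' v, G.η j ε * (G.ψ j' ε' * v) = -(G.ψ j' ε' * (G.η j ε * v)) := by
    intro j ε j' ε' v; rw [← mul_assoc, hηψ', neg_mul, mul_assoc]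
  have hψ2 : ∀ ε v, G.ψ i ε * (G.ψ i ε * v) = 0 := by
    intro ε v; rw [← mul_assoc, mul_self_eq_zero_of_mem_generators (ψ_mem_generators i ε),
      zero_mul]
  have hint : ∀ ε ε' v, G.intψ i ε (G.ψ i ε' * v)
      = (if ε = ε' then v else 0) - G.ψ i ε' * G.intψ i ε v := by
    intro ε ε' v; rw [G.intψ_ψ_mul]; simp
  have hint1 : ∀ ε ε', G.intψ i ε (G.ψ i ε') = if ε = ε' then 1 else 0 := by
    intro ε ε'; rw [← mul_one (G.ψ i ε'), hint, G.intψ_one]; simp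
  have hintη : ∀ ε j ε', G.intψ i ε (G.η j ε') = 0 := by
    intro ε j ε'; rw [← mul_one (G.η j ε'), G.intψ_η_mul, G.intψ_one]; simp
  -- Move every `ψ_i` to the left of the `η`s, in the order `ψ_i⁺ψ_i⁻`; the two integrals then
  -- keep exactly the coefficient of `ψ_i⁺ψ_i⁻`.
  by_cases h1 : (i, true) ∈ S <;> by_cases h2 : (i, false) ∈ S <;>
    simp [intψPair, fourierFactor, ψFactor, ηFactor, dualSupport, localPhase, h1, h2,
      add_mul, mul_add, mul_assoc, hint, hint1, hintη, G.intψ_η_mul, G.intψ_one, hψψ, hηψ,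
      hηψ', hψ2, smul_neg, neg_smul, smul_smul]

theorem adjoin_localGenerators_le (i : Fin n) :
    Algebra.adjoin ℂ (G.localGenerators i) ≤ Algebra.adjoin ℂ G.generators :=
  Algebra.adjoin_mono (localGenerators_subset i)

theorem ψFactor_mem_adjoin (S : Finset (Fin n × Bool)) (i : Fin n) :
    G.ψFactor S i ∈ Algebra.adjoin ℂ (G.localGenerators i) := by
  have h : ∀ ε, G.ψ i ε ∈ Algebra.adjoin ℂ (G.localGenerators i) := fun ε =>
    Algebra.subset_adjoin (Or.inl ⟨ε, rfl⟩)
  apply Subalgebra.mul_mem <;> split_ifs <;> simp [h]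

theorem ηFactor_mem_adjoin (T : Finset (Fin n × Bool)) (i : Fin n) :
    G.ηFactor T i ∈ Algebra.adjoin ℂ G.ηGenerators := by
  have h : ∀ ε, G.η i ε ∈ Algebra.adjoin ℂ G.ηGenerators := fun ε =>
    Algebra.subset_adjoin ⟨(i, ε), rfl⟩
  apply Subalgebra.mul_mem <;> split_ifs <;> simp [h]

theorem fourierFactor_mem_adjoin (i : Fin n) :
    G.fourierFactor i ∈ Algebra.adjoin ℂ (G.localGenerators i) := by
  have hψ : ∀ ε, G.ψ i ε ∈ Algebra.adjoin ℂ (G.localGenerators i) := fun ε =>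
    Algebra.subset_adjoin (Or.inl ⟨ε, rfl⟩)
  have hη : ∀ ε, G.η i ε ∈ Algebra.adjoin ℂ (G.localGenerators i) := fun ε =>
    Algebra.subset_adjoin (Or.inr ⟨ε, rfl⟩)
  unfold fourierFactor
  exact Subalgebra.mul_mem _
    (Subalgebra.add_mem _ (Subalgebra.one_mem _)
      (Subalgebra.smul_mem _ (Subalgebra.mul_mem _ (hη _) (hψ _)) _))
    (Subalgebra.add_mem _ (Subalgebra.one_mem _)
      (Subalgebra.smul_mem _ (Subalgebra.mul_mem _ (hψ _) (hη _)) _))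

variable (G) in
theorem grassmannFourier_ψMonomial (S : Finset (Fin n × Bool)) :
    grassmannFourier G (ψMonomial G S) = phase S • ηMonomial G (dualSupport S) := by
  have hL : ∀ i, G.fourierFactor i * G.ψFactor S i ∈ Algebra.adjoin ℂ (G.localGenerators i) :=
    fun i => Subalgebra.mul_mem _ (fourierFactor_mem_adjoin i) (ψFactor_mem_adjoin S i)
  rw [grassmannFourier, gexp_fourierExponent, ψMonomial_eq_prod,
    List.prod_map_mul_prod_map_of_commute (fun i j => commute_fourierFactor i
      (adjoin_localGenerators_le j (ψFactor_mem_adjoin S j))),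
    intψAll_eq_prod, List.prod_map_apply_prod_map_of_nodup G.intψPair _
      (Algebra.adjoin ℂ G.ηGenerators).toSubmonoid
      (fun i j hij => intψPair_mul_of_ne hij (hL i))
      (fun i => by
        rw [intψPair_fourierFactor_mul_ψFactor]
        exact Subalgebra.smul_mem _ (ηFactor_mem_adjoin _ i) _)
      (fun i _ hw => intψPair_mul_of_mem_adjoin_η i (adjoin_localGenerators_le i (hL i)) hw)
      (List.nodup_finRange n)]
  simp only [intψPair_fourierFactor_mul_ψFactor]
  rw [List.prod_map_smul, phase, Fin.prod_univ_def, ηMonomial_eq_prod]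

theorem ψFactor_insert_of_ne {i j : Fin n} (h : i ≠ j) (ε : Bool) (S : Finset (Fin n × Bool)) :
    G.ψFactor (insert (j, ε) S) i = G.ψFactor S i := by
  simp [ψFactor, h]

theorem exists_ψ_mul_ψFactor_self (j : Fin n) (ε : Bool) (S : Finset (Fin n × Bool)) :
    ∃ c : ℂ, G.ψ j ε * G.ψFactor S j = c • G.ψFactor (insert (j, ε) S) j := by
  have hsq : ∀ ε', G.ψ j ε' * G.ψ j ε' = 0 := fun ε' =>
    mul_self_eq_zero_of_mem_generators (ψ_mem_generators j ε')
  have hsq' : G.ψ j false * (G.ψ j true * G.ψ j false) = 0 := by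
    rw [← mul_assoc, G.anticomm_ψψ, neg_mul, mul_assoc, hsq, mul_zero, neg_zero]
  refine ⟨if (j, ε) ∈ S then 0 else if ε = false ∧ (j, true) ∈ S then -1 else 1, ?_⟩
  by_cases h1 : (j, true) ∈ S <;> by_cases h2 : (j, false) ∈ S <;> cases ε <;>
    simp [ψFactor, h1, h2, hsq, hsq', ← mul_assoc, G.anticomm_ψψ j false j true]

theorem exists_ψ_mul_ψFactor (j : Fin n) (ε : Bool) (S : Finset (Fin n × Bool)) (i : Fin n) :
    ∃ c : ℂ, G.ψ j ε * G.ψFactor S i = c • (G.ψFactor S i * G.ψ j ε) := by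
  have h : ∀ ε', G.ψ j ε * G.ψ i ε' = -(G.ψ i ε' * G.ψ j ε) := fun ε' => G.anticomm_ψψ ..
  refine ⟨(if (i, true) ∈ S then -1 else 1) * (if (i, false) ∈ S then -1 else 1), ?_⟩
  rw [ψFactor, ← mul_assoc, mul_ite_one_eq_smul (R := ℂ) (h true), smul_mul_assoc, mul_assoc,
    mul_ite_one_eq_smul (R := ℂ) (h false), mul_smul_comm, smul_smul, ← mul_assoc]

theorem exists_ψ_mul_prod_ψFactor (j : Fin n) (ε : Bool) (S : Finset (Fin n × Bool))
    {l : List (Fin n)} (hl : l.Nodup) (hj : j ∈ l) :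
    ∃ c : ℂ, G.ψ j ε * (l.map (G.ψFactor S)).prod
      = c • (l.map (G.ψFactor (insert (j, ε) S))).prod := by
  induction l with
  | nil => cases hj
  | cons i l ih =>
    obtain ⟨hi, hl⟩ := List.nodup_cons.1 hl
    simp only [List.map_cons, List.prod_cons]
    by_cases hij : i = j
    · subst hij
      obtain ⟨c, hc⟩ := exists_ψ_mul_ψFactor_self (G := G) i ε S
      have hrest : l.map (G.ψFactor (insert (i, ε) S)) = l.map (G.ψFactor S) :=
        List.map_congr_left fun k hk => ψFactor_insert_of_ne (by rintro rfl; exact hi hk) ε S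
      exact ⟨c, by rw [← mul_assoc, hc, hrest, smul_mul_assoc]⟩
    · obtain ⟨c, hc⟩ := exists_ψ_mul_ψFactor j ε S i
      obtain ⟨d, hd⟩ := ih hl ((List.mem_cons.1 hj).resolve_left (Ne.symm hij))
      exact ⟨c * d, by rw [← mul_assoc, hc, smul_mul_assoc, mul_assoc, hd,
        ψFactor_insert_of_ne hij, mul_smul_comm, smul_smul]⟩

theorem ψ_mul_ψMonomial_mem_span (j : Fin n) (ε : Bool) (S : Finset (Fin n × Bool)) :
    G.ψ j ε * ψMonomial G S ∈ Submodule.span ℂ (Set.range (ψMonomial G)) := by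
  obtain ⟨c, hc⟩ := exists_ψ_mul_prod_ψFactor (G := G) j ε S (List.nodup_finRange n)
    (List.mem_finRange j)
  rw [ψMonomial_eq_prod, hc, ← ψMonomial_eq_prod]
  exact Submodule.smul_mem _ c (Submodule.subset_span ⟨_, rfl⟩)

variable (G) in
theorem adjoin_ψ_le_span_ψMonomial :
    Subalgebra.toSubmodule (Algebra.adjoin ℂ G.ψGenerators)
      ≤ Submodule.span ℂ (Set.range (ψMonomial G)) := by
  refine Algebra.adjoin_le_of_one_mem_of_mul_mem
    (Submodule.subset_span ⟨∅, ψMonomial_empty G⟩) ?_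
  rintro _ ⟨⟨j, ε⟩, rfl⟩ y hy
  induction hy using Submodule.span_induction with
  | mem x hx => obtain ⟨S, rfl⟩ := hx; exact ψ_mul_ψMonomial_mem_span j ε S
  | zero => simp
  | add x y _ _ hx hy => rw [mul_add]; exact add_mem hx hy
  | smul c x _ hx => rw [mul_smul_comm]; exact Submodule.smul_mem _ c hx

variable (G) in
theorem grassmannFourier_sum_smul {ι : Type*} (s : Finset ι) (c : ι → ℂ) (v : ι → G.A) :
    grassmannFourier G (∑ i ∈ s, c i • v i) = ∑ i ∈ s, c i • grassmannFourier G (v i) := by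
  simp only [grassmannFourier, Finset.mul_sum, mul_smul_comm, map_sum, map_smul]

end GrassmannSetup

/-- The Grassmann Fourier transform preserves the ℓ¹ norm: with `b` the monomial basis
`b (S,T) = ψ^S η^T` and `‖f‖ = Σ |coefficients|`, one has `‖f̂‖ = ‖f‖` for every element
`f = f(ψ)` of the subalgebra generated by the `ψ`'s; in particular each coefficient of
`f̂` equals a coefficient of `f` multiplied by a complex number of modulus one. -/
theorem grassmann_fourier_preserves_l1_norm (n : ℕ) (G : GrassmannSetup n)
    (b : Module.Basis (Finset (Fin n × Bool) × Finset (Fin n × Bool)) ℂ G.A)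
    (hb : ∀ S T, b (S, T) = ψMonomial G S * ηMonomial G T)
    (f : G.A)
    (hf : f ∈ Algebra.adjoin ℂ (Set.range fun p : Fin n × Bool => G.ψ p.1 p.2)) :
    (∑ P : Finset (Fin n × Bool) × Finset (Fin n × Bool),
        ‖b.repr (grassmannFourier G f) P‖)
      = (∑ P : Finset (Fin n × Bool) × Finset (Fin n × Bool), ‖b.repr f P‖)
    ∧ ∃ e : Finset (Fin n × Bool) ≃ Finset (Fin n × Bool),
        ∃ u : Finset (Fin n × Bool) → ℂ, ∀ S, ‖u S‖ = 1 ∧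
          b.repr (grassmannFourier G f) (∅, e S) = u S * b.repr f (S, ∅) := by
  obtain ⟨c, hc⟩ :=
    (Submodule.mem_span_range_iff_exists_fun ℂ).1 (G.adjoin_ψ_le_span_ψMonomial hf)
  let e := GrassmannSetup.dualSupport_involutive.toPerm (GrassmannSetup.dualSupport (n := n))
  let eψ := Function.Embedding.sectL (Finset (Fin n × Bool)) (∅ : Finset (Fin n × Bool))
  let eη := e.toEmbedding.trans (Function.Embedding.sectR (∅ : Finset (Fin n × Bool)) _)
  have hf' : f = ∑ S, c S • b (eψ S) := by
    simp [eψ, ← hc, hb]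
  have hFf : grassmannFourier G f = ∑ S, (c S * GrassmannSetup.phase S) • b (eη S) := by
    simp [eη, e, ← hc, hb, G.grassmannFourier_sum_smul, G.grassmannFourier_ψMonomial, smul_smul]
  refine ⟨?_, e, GrassmannSetup.phase, fun S => ⟨GrassmannSetup.norm_phase S, ?_⟩⟩
  · rw [hFf, hf', b.sum_norm_repr_sum_smul_comp, b.sum_norm_repr_sum_smul_comp]
    simp [GrassmannSetup.norm_phase]
  · change b.repr _ (eη S) = _ * b.repr _ (eψ S)
    rw [hFf, hf', b.repr_sum_smul_comp_apply, b.repr_sum_smul_comp_apply, mul_comm]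
end

section
/- Interpolation (first decoupling step) in a commutative Banach algebra: let X be a finite set, v : X × X → A a symmetric family of elements of a commutative unital Banach algebra A, V_X := (1/2) Σ_{x,y ∈ X} v_{x,y}, and for x₁ ∈ X and s ∈ [0,1] let W(s) := (1/2) Σ_{x,y} s({x,y}) v_{x,y}, where s({x,y}) = s if {x,y} intersects both {x₁} and its complement, and s({x,y}) = 1 otherwise. Then exp(V_X) = Σ_{{x,y} coupling across ∂{x₁}} v_{x,y} ∫_0^1 exp(W(s)) ds + exp(W(0)). -/
open Finset intervalIntegral

/-- Interpolation (first decoupling step) in a commutative Banach algebra: with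
`V_X = (1/2) Σ_{x,y} v_{x,y}` and `W(s)` obtained by multiplying by `s` exactly those
terms `v_{x,y}` whose pair `{x,y}` couples across `∂{x₁}` (i.e. meets both `{x₁}` and
its complement), one has
`exp V_X = Σ_{{x,y} coupling} v_{x,y} ∫₀¹ exp (W s) ds + exp (W 0)`;
the coupling pairs are exactly `{x₁, y}` with `y ≠ x₁`. -/
theorem interpolation_first_decoupling {ι : Type*} [Fintype ι] [DecidableEq ι]
    {A : Type*} [NormedCommRing A] [NormedAlgebra ℂ A] [CompleteSpace A]
    (v : ι → ι → A) (hsymm : ∀ x y, v x y = v y x) (x₁ : ι) :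
    let W : ℝ → A := fun s =>
      (2 : ℂ)⁻¹ • ∑ x, ∑ y,
        (if (x = x₁ ∨ y = x₁) ∧ ¬(x = x₁ ∧ y = x₁) then ((s : ℂ)) • v x y else v x y)
    NormedSpace.exp ((2 : ℂ)⁻¹ • ∑ x, ∑ y, v x y)
      = (∑ y ∈ Finset.univ.erase x₁,
          v x₁ y * ∫ s in (0 : ℝ)..1, NormedSpace.exp (W s))
        + NormedSpace.exp (W 0) := by
  intro W
  let +nondep : NormedAlgebra ℚ A := .restrictScalars ℚ ℂ A
  set D : A := ∑ y ∈ Finset.univ.erase x₁, v x₁ y with hD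
  set cond : ι → ι → Prop := fun x y => (x = x₁ ∨ y = x₁) ∧ ¬(x = x₁ ∧ y = x₁) with hcond
  -- C = 2 D
  have hC : ∑ x, ∑ y, (if cond x y then v x y else 0) = D + D := by
    rw [← Finset.add_sum_erase _ _ (Finset.mem_univ x₁)]
    have h1 : ∑ y, (if cond x₁ y then v x₁ y else 0) = D := by
      rw [hD, ← Finset.add_sum_erase _ (fun y => if cond x₁ y then v x₁ y else 0)
        (Finset.mem_univ x₁)]
      have : (if cond x₁ x₁ then v x₁ x₁ else 0) = 0 := by simp [hcond]
      rw [this, zero_add]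
      refine Finset.sum_congr rfl fun y hy => ?_
      have hy' : y ≠ x₁ := Finset.ne_of_mem_erase hy
      simp [hcond, hy']
    have h2 : ∑ x ∈ Finset.univ.erase x₁, ∑ y, (if cond x y then v x y else 0) = D := by
      rw [hD]
      refine Finset.sum_congr rfl fun x hx => ?_
      have hx' : x ≠ x₁ := Finset.ne_of_mem_erase hx
      have : ∀ y, (if cond x y then v x y else 0) = if y = x₁ then v x y else 0 := by
        intro y; simp [hcond, hx']
      simp_rw [this]
      rw [Finset.sum_ite_eq' Finset.univ x₁ (fun y => v x y)]
      simp [hsymm x x₁]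
    rw [h1, h2]
  have hW : ∀ s : ℝ, W s = (s : ℂ) • D + W 0 := by
    intro s
    have hsplit : ∀ (c : ℂ), ∑ x, ∑ y, (if cond x y then c • v x y else v x y)
        = c • (∑ x, ∑ y, (if cond x y then v x y else 0))
          + ∑ x, ∑ y, (if cond x y then 0 else v x y) := by
      intro c
      rw [Finset.smul_sum, ← Finset.sum_add_distrib]
      refine Finset.sum_congr rfl fun x _ => ?_
      rw [Finset.smul_sum, ← Finset.sum_add_distrib]
      refine Finset.sum_congr rfl fun y _ => ?_
      split_ifs <;> simp
    have h2 : (2:ℂ)⁻¹ • (D + D) = D := by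
      rw [← two_smul ℂ D, smul_smul]; norm_num
    show (2 : ℂ)⁻¹ • _ = _ + (2 : ℂ)⁻¹ • _
    rw [hsplit, hsplit, hC]
    push_cast
    rw [zero_smul, zero_add, smul_add, smul_comm ((2:ℂ)⁻¹) ((s:ℂ)), h2]
  -- exp splits
  have hexp : ∀ s : ℝ, NormedSpace.exp (W s)
      = NormedSpace.exp ((s : ℂ) • D) * NormedSpace.exp (W 0) := by
    intro s
    rw [hW s, NormedSpace.exp_add]
  -- derivative
  have hderiv : ∀ t : ℝ, HasDerivAt (fun s : ℝ => NormedSpace.exp (W s))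
      (D * NormedSpace.exp (W t)) t := by
    intro t
    have h0 : HasDerivAt (fun u : ℝ => NormedSpace.exp (u • D))
        (NormedSpace.exp (t • D) * D) t := hasDerivAt_exp_smul_const D t
    have heq : ∀ u : ℝ, NormedSpace.exp (u • D) = NormedSpace.exp ((u : ℂ) • D) := by
      intro u
      rw [Complex.coe_smul]
    have h1 : HasDerivAt (fun u : ℝ => NormedSpace.exp ((u : ℂ) • D))
        (NormedSpace.exp ((t : ℂ) • D) * D) t := by
      simpa [heq] using h0
    have h2 := h1.mul_const (NormedSpace.exp (W 0))
    have : (fun s : ℝ => NormedSpace.exp (W s))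
        = fun u : ℝ => NormedSpace.exp ((u : ℂ) • D) * NormedSpace.exp (W 0) := by
      funext u; exact hexp u
    rw [this]
    convert h2 using 1
    rw [hexp t]; ring
  have hcont : Continuous fun s : ℝ => NormedSpace.exp (W s) := by
    have : Continuous fun s : ℝ => W s := by
      have hfun : (fun s : ℝ => W s) = fun s : ℝ => ((s : ℝ) : ℂ) • D + W 0 := funext hW
      rw [hfun]; fun_prop
    exact (NormedSpace.exp_continuous (𝔸 := A)).comp this
  have hint : IntervalIntegrable (fun s : ℝ => D * NormedSpace.exp (W s))
      MeasureTheory.volume 0 1 :=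
    ((continuous_const.mul hcont)).intervalIntegrable 0 1
  have hftc : ∫ s in (0:ℝ)..1, D * NormedSpace.exp (W s)
      = NormedSpace.exp (W 1) - NormedSpace.exp (W 0) :=
    intervalIntegral.integral_eq_sub_of_hasDerivAt (fun t _ => hderiv t) hint
  have hW1 : W 1 = (2 : ℂ)⁻¹ • ∑ x, ∑ y, v x y := by
    show (2 : ℂ)⁻¹ • _ = _
    congr 1
    refine Finset.sum_congr rfl fun x _ => Finset.sum_congr rfl fun y _ => ?_
    by_cases h : cond x y <;> simp [h]
  have hmul : ∫ s in (0:ℝ)..1, D * NormedSpace.exp (W s)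
      = D * ∫ s in (0:ℝ)..1, NormedSpace.exp (W s) := by
    have := (ContinuousLinearMap.mul ℂ A D).intervalIntegral_comp_comm
      (hcont.intervalIntegrable (μ := MeasureTheory.volume) 0 1)
    simpa using this
  have hsum : ∑ y ∈ Finset.univ.erase x₁,
      v x₁ y * ∫ s in (0 : ℝ)..1, NormedSpace.exp (W s)
      = D * ∫ s in (0:ℝ)..1, NormedSpace.exp (W s) := by
    rw [hD, Finset.sum_mul]
  rw [hsum, ← hmul, hftc, ← hW1]
  abel
end
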